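/- arXiv:1103.4341 — 4 statements merged into one kernel-verified Lean document; each statement's English description precedes it below -/
import Mathlib

section
/- Let G be a K_{2,2,2}-free hole-edge-disjoint simple graph and let C be a hole of G. Then G has no C-avoiding path between any two non-adjacent vertices of C. -/
open SimpleGraph

universe u

/-- A *hole* of a simple graph: an induced (chordless) cycle of length at least 4. -/
def IsHole {V : Type u} (G : SimpleGraph V) {v : V} (c : G.Walk v v) : Prop :=
  c.IsCycle ∧ 4 ≤ c.length ∧
    ∀ x ∈ c.support, ∀ y ∈ c.support, G.Adj x y → s(x, y) ∈ c.edges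

/-- A graph is *chordal* if it has no hole. -/
def Chordal {V : Type u} (G : SimpleGraph V) : Prop :=
  ∀ (v : V) (c : G.Walk v v), ¬ IsHole G c

/-- A graph is *hole-edge-disjoint* if any two of its holes either have the same edge set
or share no edge. -/
def HoleEdgeDisjoint {V : Type u} (G : SimpleGraph V) : Prop :=
  ∀ (u v : V) (c₁ : G.Walk u u) (c₂ : G.Walk v v), IsHole G c₁ → IsHole G c₂ →
    ({e | e ∈ c₁.edges} = {e | e ∈ c₂.edges} ∨ ∀ e ∈ c₁.edges, e ∉ c₂.edges)

/-- The complete tripartite graph `K_{2,2,2}`. -/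
def K222 : SimpleGraph (Fin 3 × Fin 2) where
  Adj a b := a.1 ≠ b.1
  symm := ⟨fun _ _ h => Ne.symm h⟩
  loopless := ⟨fun _ h => h rfl⟩

/-- A graph is `K_{2,2,2}`-free if it has no induced subgraph isomorphic to `K_{2,2,2}`. -/
def K222Free {V : Type u} (G : SimpleGraph V) : Prop :=
  ¬ ∃ f : Fin 3 × Fin 2 → V, Function.Injective f ∧
      ∀ a b, G.Adj (f a) (f b) ↔ K222.Adj a b

/-- `X_C`: the set of vertices adjacent to every vertex of the hole `C`. -/
def holeNbrs {V : Type u} (G : SimpleGraph V) {v : V} (c : G.Walk v v) : Set V :=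
  {x | ∀ y ∈ c.support, G.Adj x y}

/-- `V(C) ∪ X_C`. -/
def avoidSet {V : Type u} (G : SimpleGraph V) {v : V} (c : G.Walk v v) : Set V :=
  {x | x ∈ c.support} ∪ holeNbrs G c

/-- A `C`-avoiding path: a path none of whose internal vertices lie in `V(C) ∪ X_C`,
and, if it has length 1, at least one of its two vertices is not in `V(C) ∪ X_C`. -/
def IsCAvoidingPath {V : Type u} (G : SimpleGraph V) {v : V} (c : G.Walk v v)
    {a b : V} (W : G.Walk a b) : Prop :=
  W.IsPath ∧
    (∀ x ∈ W.support, x ≠ a → x ≠ b → x ∉ avoidSet G c) ∧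
    (W.length = 1 → a ∉ avoidSet G c ∨ b ∉ avoidSet G c)

/-- `S_{C,e}` for `e = ab`: all internal vertices of `C`-avoiding `(a,b)`-paths. -/
def Sset {V : Type u} (G : SimpleGraph V) {v : V} (c : G.Walk v v) (a b : V) : Set V :=
  {w | ∃ W : G.Walk a b, IsCAvoidingPath G c W ∧ w ∈ W.support ∧ w ≠ a ∧ w ≠ b}

/-- `T_{C,e}` for `e = ab`: all vertices `w` such that `a w b` is a `C`-avoiding path. -/
def Tset {V : Type u} (G : SimpleGraph V) {v : V} (c : G.Walk v v) (a b : V) : Set V :=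
  {w | ∃ (h₁ : G.Adj a w) (h₂ : G.Adj w b),
      IsCAvoidingPath G c (Walk.cons h₁ (Walk.cons h₂ Walk.nil))}

/-- `X_{C,e} = X_C ∪ {a, b}` for `e = ab`. -/
def Xce {V : Type u} (G : SimpleGraph V) {v : V} (c : G.Walk v v) (a b : V) : Set V :=
  holeNbrs G c ∪ {a, b}

/-- The number of connected components of a graph. -/
noncomputable def numComponents {V : Type u} (G : SimpleGraph V) : ℕ :=
  Nat.card G.ConnectedComponent

/-- `X` is a vertex cut of `G` if `G − X` has more connected components than `G`. -/
def IsVertexCut {V : Type u} (G : SimpleGraph V) (X : Set V) : Prop :=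
  numComponents G < numComponents (G.induce Xᶜ)

/-- A clique cut: a vertex cut which is a clique. -/
def IsCliqueCut {V : Type u} (G : SimpleGraph V) (X : Set V) : Prop :=
  G.IsClique X ∧ IsVertexCut G X

/-- `U` is a union of connected components of `G − X`. -/
def IsComponentUnion {V : Type u} (G : SimpleGraph V) (X U : Set V) : Prop :=
  U ⊆ Xᶜ ∧ ∀ a b : ↥(Xᶜ), (G.induce Xᶜ).Reachable a b → ((a : V) ∈ U ↔ (b : V) ∈ U)

/-- A chordal cut: a clique cut `X` such that there is a (nonempty) union `U` of
connected components of `G − X` with `G[U ∪ X]` chordal. -/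
def IsChordalCut {V : Type u} (G : SimpleGraph V) (X : Set V) : Prop :=
  IsCliqueCut G X ∧
    ∃ U : Set V, U.Nonempty ∧ IsComponentUnion G X U ∧ Chordal (G.induce (U ∪ X))

/-- `x` lies in `Q_{C,e}`, the connected component of `G − X_{C,e}` containing
`V(C) \ {a, b}` (for `e = ab`). -/
def InQ {V : Type u} (G : SimpleGraph V) {v : V} (c : G.Walk v v) (a b : V) (x : V) : Prop :=
  ∃ (hx : x ∈ (Xce G c a b)ᶜ) (y : V) (hy : y ∈ (Xce G c a b)ᶜ),
    y ∈ c.support ∧ y ≠ a ∧ y ≠ b ∧ (G.induce (Xce G c a b)ᶜ).Reachable ⟨x, hx⟩ ⟨y, hy⟩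

/-- The vertex set of `U_{C,e}`: the union of the connected components of
`G − X_{C,e}` other than `Q_{C,e}` containing a vertex of `T_{C,e}`. -/
def Uset {V : Type u} (G : SimpleGraph V) {v : V} (c : G.Walk v v) (a b : V) : Set V :=
  {x | ∃ hx : x ∈ (Xce G c a b)ᶜ, ¬ InQ G c a b x ∧
      ∃ (t : V) (ht : t ∈ (Xce G c a b)ᶜ), t ∈ Tset G c a b ∧ ¬ InQ G c a b t ∧
        (G.induce (Xce G c a b)ᶜ).Reachable ⟨x, hx⟩ ⟨t, ht⟩}

/-- `G` has the chordal property: there are a hole `C` and an edge `e` of `C` such that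
`G[V(U_{C,e}) ∪ X_{C,e}]` is chordal. -/
def HasChordalProperty {V : Type u} (G : SimpleGraph V) : Prop :=
  ∃ (v : V) (c : G.Walk v v) (a b : V), IsHole G c ∧ s(a, b) ∈ c.edges ∧
    Chordal (G.induce (Uset G c a b ∪ Xce G c a b))

/-- `h(G)`: the number of holes of `G`, counted by their edge sets. -/
noncomputable def holeCount {V : Type u} (G : SimpleGraph V) : ℕ :=
  Nat.card {s : Set (Sym2 V) // ∃ (v : V) (c : G.Walk v v), IsHole G c ∧ s = {e | e ∈ c.edges}}

/-- `G` together with `k` added isolated vertices. -/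
def addIsolated {V : Type u} (G : SimpleGraph V) (k : ℕ) : SimpleGraph (V ⊕ Fin k) where
  Adj a b := ∃ x y, G.Adj x y ∧ a = Sum.inl x ∧ b = Sum.inl y
  symm := by
    constructor
    rintro a b ⟨x, y, h, rfl, rfl⟩
    exact ⟨y, x, h.symm, rfl, rfl⟩
  loopless := by
    constructor
    rintro a ⟨x, y, h, rfl, hy⟩
    obtain rfl := Sum.inl.inj hy
    exact G.irrefl h

/-- A digraph (given by its arc relation) is acyclic: it has no directed closed walk. -/
def IsAcyclicDigraph {α : Type u} (r : α → α → Prop) : Prop :=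
  ∀ x, ¬ Relation.TransGen r x x

/-- `H` is the competition graph of some acyclic digraph: distinct vertices are adjacent
iff they have a common out-neighbour (prey). -/
def IsCompetitionGraphOfAcyclicDigraph {α : Type u} (H : SimpleGraph α) : Prop :=
  ∃ r : α → α → Prop, IsAcyclicDigraph r ∧
    ∀ a b : α, H.Adj a b ↔ a ≠ b ∧ ∃ x, r a x ∧ r b x

/-- The competition number `k(G)`: the least `k` such that `G` together with `k` isolated
vertices is the competition graph of an acyclic digraph. -/
noncomputable def compNumber {V : Type u} (G : SimpleGraph V) : ℕ :=
  sInf {k | IsCompetitionGraphOfAcyclicDigraph (addIsolated G k)}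

/-!
Let `W` be a `C`-avoiding path between non-adjacent vertices `a, b` of the hole `C`; we may take
`W` chordless, so that `u := W.snd` is the only vertex of `W` adjacent to `a`. Let `a a'` be an
edge of `C`, and let `U` consist of `W` and the arc of `C` from `a'` to `b` not through `a`; `U`
misses a vertex `q` of the other arc. A shortest walk from `a'` to `a` inside `U` avoiding the edge
`a a'`, closed up by that edge, is chordless; of length at least 4 it would be a hole sharing the
edge `a a'` with `C` but missing `q`, which hole-edge-disjointness forbids. So `a` and `a'` have a
common neighbour in `U`, and as `C` has no triangle it can only be `u`. Thus `u` is adjacent to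
both hole-neighbours of `a`, which are distinct and non-adjacent. Running the same argument on the
paths `w u t` shows that the hole vertices adjacent to `u` are closed under hole-adjacency, so
`u ∈ X_C`: a contradiction.
-/

namespace SimpleGraph.Walk

variable {V : Type*} {G : SimpleGraph V} {u v x y : V}

lemma exists_isSubwalk_of_mem_support [DecidableEq V] (p : G.Walk u v) (hx : x ∈ p.support)
    (hy : y ∈ p.support) :
    (∃ q : G.Walk x y, q.IsSubwalk p) ∨ ∃ q : G.Walk y x, q.IsSubwalk p := by
  rw [← p.take_spec hx, mem_support_append_iff] at hy
  rcases hy with hy | hy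
  · exact .inr ⟨_, ((p.takeUntil x hx).isSubwalk_dropUntil hy).trans (p.isSubwalk_takeUntil hx)⟩
  · exact .inl ⟨_, ((p.dropUntil x hx).isSubwalk_takeUntil hy).trans (p.isSubwalk_dropUntil hx)⟩

lemma mem_edges_of_length_eq_one (p : G.Walk u v) (hp : p.length = 1) : s(u, v) ∈ p.edges := by
  cases p with
  | nil => simp at hp
  | cons h q =>
    obtain rfl := eq_of_length_eq_zero (by simpa using hp)
    simp

lemma isChordless_of_length_eq_dist (p : G.Walk u v) (hp : p.length = G.dist u v) :
    p.IsChordless := by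
  classical
  refine isChordless_iff_forall_mem_edges.mpr fun x y hx hy hxy => ?_
  rcases p.exists_isSubwalk_of_mem_support hx hy with ⟨q, hq⟩ | ⟨q, hq⟩
  · exact hq.edges_subset (q.mem_edges_of_length_eq_one
      ((length_eq_dist_of_subwalk hp hq).trans (dist_eq_one_iff_adj.mpr hxy)))
  · rw [Sym2.eq_swap]
    exact hq.edges_subset (q.mem_edges_of_length_eq_one
      ((length_eq_dist_of_subwalk hp hq).trans (dist_eq_one_iff_adj.mpr hxy.symm)))

lemma exists_isPath_chordless_within {U : Set V} {E : Set (Sym2 V)} (p : G.Walk u v)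
    (hpU : ∀ z ∈ p.support, z ∈ U) (hpE : ∀ e ∈ p.edges, e ∉ E) :
    ∃ q : G.Walk u v, q.IsPath ∧ (∀ z ∈ q.support, z ∈ U) ∧ (∀ e ∈ q.edges, e ∉ E) ∧
      ∀ z ∈ q.support, ∀ w ∈ q.support, G.Adj z w → s(z, w) ∉ E → s(z, w) ∈ q.edges := by
  let H := ((⊤ : G.Subgraph).induce U).spanningCoe.deleteEdges E
  have hH {a b : V} : H.Adj a b ↔ (a ∈ U ∧ b ∈ U ∧ G.Adj a b) ∧ s(a, b) ∉ E := by simp [H]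
  have hHG : H ≤ G := fun a b h => (hH.mp h).1.2.2
  have hpH : ∀ e ∈ p.edges, e ∈ H.edgeSet := by
    intro e he
    induction e using Sym2.ind
    exact hH.mpr ⟨⟨hpU _ (p.fst_mem_support_of_mem_edges he),
      hpU _ (p.snd_mem_support_of_mem_edges he), p.adj_of_mem_edges he⟩, hpE _ he⟩
  obtain ⟨q, hq, hlen⟩ := (p.transfer H hpH).reachable.exists_path_of_dist
  have hqU : ∀ z ∈ q.support, z ∈ U := by
    rw [← q.cons_map_snd_darts]
    rintro z (_ | ⟨_, hz⟩)
    · exact hpU _ p.start_mem_support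
    · obtain ⟨d, -, rfl⟩ := List.mem_map.mp hz
      exact (hH.mp d.adj).1.2.1
  refine ⟨q.mapLe hHG, hq.mapLe hHG, by simpa using hqU, fun e he => ?_, fun z hz w hw hzw hE => ?_⟩
  · rw [edges_mapLe_eq_edges] at he
    induction e using Sym2.ind
    exact (hH.mp (q.edges_subset_edgeSet he)).2
  · rw [support_mapLe_eq_support] at hz hw
    rw [edges_mapLe_eq_edges]
    exact (q.isChordless_of_length_eq_dist hlen).mem_edges hz hw
      (hH.mpr ⟨⟨hqU z hz, hqU w hw, hzw⟩, hE⟩)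

lemma IsCycle.mem_edges_start_iff {c : G.Walk v v} (hc : c.IsCycle) :
    s(v, x) ∈ c.edges ↔ x = c.snd ∨ x = c.penultimate := by
  rw [← adj_toSubgraph_iff_mem_edges, ← Subgraph.mem_neighborSet,
    hc.neighborSet_toSubgraph_endpoint]
  rfl

lemma IsCycle.eq_or_eq_or_eq_of_mem_edges [DecidableEq V] {c : G.Walk v v} (hc : c.IsCycle)
    {w t₁ t₂ t₃ : V} (hw : w ∈ c.support) (h₁ : s(w, t₁) ∈ c.edges) (h₂ : s(w, t₂) ∈ c.edges)
    (h₃ : s(w, t₃) ∈ c.edges) : t₁ = t₂ ∨ t₁ = t₃ ∨ t₂ = t₃ := by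
  simp only [← (c.rotate_edges w hw).mem_iff, (hc.rotate hw).mem_edges_start_iff] at h₁ h₂ h₃
  grind

end SimpleGraph.Walk

open SimpleGraph.Walk

section

variable {V : Type u} {G : SimpleGraph V} {v x y z : V} {c : G.Walk v v}

namespace IsHole

lemma rotate [DecidableEq V] (hc : IsHole G c) (hx : x ∈ c.support) :
    IsHole G (c.rotate x hx) := by
  refine ⟨hc.1.rotate hx, by simpa using hc.2.1, fun y hy z hz hyz => ?_⟩
  rw [(c.rotate_edges x hx).mem_iff]
  rw [mem_support_rotate_iff] at hy hz
  exact hc.2.2 y hy z hz hyz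

lemma reverse (hc : IsHole G c) : IsHole G c.reverse := by
  refine ⟨hc.1.reverse, by simpa using hc.2.1, fun y hy z hz hyz => ?_⟩
  rw [edges_reverse, List.mem_reverse]
  rw [support_reverse, List.mem_reverse] at hy hz
  exact hc.2.2 y hy z hz hyz

lemma not_adj_of_adj_of_adj (hc : IsHole G c) (hx : x ∈ c.support) (hy : y ∈ c.support)
    (hz : z ∈ c.support) (hxy : G.Adj x y) (hxz : G.Adj x z) : ¬ G.Adj y z := by
  classical
  intro hyz
  set d := c.rotate x hx
  have hd : IsHole G d := hc.rotate hx
  have hmem {w : V} (hw : w ∈ c.support) : w ∈ d.support := (mem_support_rotate_iff ..).mpr hw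
  have hnbr {w : V} (hw : w ∈ c.support) (hxw : G.Adj x w) : w = d.snd ∨ w = d.penultimate :=
    hd.1.mem_edges_start_iff.mp (hd.2.2 _ d.start_mem_support _ (hmem hw) hxw)
  have hadj : G.Adj d.snd d.penultimate := by
    rcases hnbr hy hxy with rfl | rfl <;> rcases hnbr hz hxz with rfl | rfl
    exacts [absurd hyz (G.irrefl), hyz, hyz.symm, absurd hyz (G.irrefl)]
  have hlen := hd.2.1
  have h1 : d.toSubgraph.Adj (d.getVert 1) (d.getVert (d.length - 1)) :=
    adj_toSubgraph_iff_mem_edges.mpr (hd.2.2 _ (d.getVert_mem_support 1) _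
      (d.getVert_mem_support _) hadj)
  rw [← Subgraph.mem_neighborSet, hd.1.neighborSet_toSubgraph_internal one_ne_zero (by omega)]
    at h1
  simp only [Set.mem_insert_iff, Set.mem_singleton_iff] at h1
  rcases h1 with h1 | h1
  · have := hd.1.getVert_injOn' (by simp) (by simp) h1
    omega
  · have := hd.1.getVert_injOn ⟨by omega, by omega⟩ ⟨by omega, by omega⟩ h1
    omega

lemma exists_nonadj_nbrs [DecidableEq V] (hc : IsHole G c) (hx : x ∈ c.support) :
    ∃ y z, s(x, y) ∈ c.edges ∧ s(x, z) ∈ c.edges ∧ y ≠ z ∧ ¬ G.Adj y z := by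
  have hd := hc.rotate hx
  have hxd : x ∈ (c.rotate x hx).support := (c.rotate x hx).start_mem_support
  refine ⟨_, _, (c.rotate_edges x hx).mem_iff.mp (hd.1.mem_edges_start_iff.mpr (.inl rfl)),
    (c.rotate_edges x hx).mem_iff.mp (hd.1.mem_edges_start_iff.mpr (.inr rfl)),
    hd.1.snd_ne_penultimate, hd.not_adj_of_adj_of_adj hxd (getVert_mem_support ..)
      (getVert_mem_support ..) ((c.rotate x hx).adj_snd hd.1.not_nil)
      ((c.rotate x hx).adj_penultimate hd.1.not_nil).symm⟩

lemma exists_mem_edges [DecidableEq V] (hc : IsHole G c) (hx : x ∈ c.support) :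
    ∃ y, s(x, y) ∈ c.edges :=
  ⟨_, (c.rotate_edges x hx).mem_iff.mp ((hc.1.rotate hx).mem_edges_start_iff.mpr (.inl rfl))⟩

end IsHole

lemma isHole_cons (h : G.Adj x y) {p : G.Walk y x} (hp : p.IsPath) (hpe : s(x, y) ∉ p.edges)
    (hlen : 3 ≤ p.length)
    (hchord : ∀ a ∈ p.support, ∀ b ∈ p.support, G.Adj a b → s(a, b) ≠ s(x, y) → s(a, b) ∈ p.edges) :
    IsHole G (cons h p) := by
  refine ⟨(cons_isCycle_iff p h).mpr ⟨hp, hpe⟩, by simp only [length_cons]; omega,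
    fun a ha b hb hab => ?_⟩
  rw [support_cons, List.mem_cons] at ha hb
  replace ha : a ∈ p.support := ha.elim (· ▸ p.end_mem_support) id
  replace hb : b ∈ p.support := hb.elim (· ▸ p.end_mem_support) id
  rw [edges_cons, List.mem_cons]
  by_cases hab' : s(a, b) = s(x, y)
  · exact .inl hab'
  · exact .inr (hchord a ha b hb hab hab')

namespace HoleEdgeDisjoint

lemma exists_common_adj (hG : HoleEdgeDisjoint G) (hc : IsHole G c)
    (hxy : s(x, y) ∈ c.edges) {U : Set V} {q : V} (hq : q ∈ c.support) (hqU : q ∉ U)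
    (p : G.Walk y x) (hpU : ∀ z ∈ p.support, z ∈ U) (hpe : s(x, y) ∉ p.edges) :
    ∃ z ∈ U, G.Adj x z ∧ G.Adj y z := by
  classical
  obtain ⟨p, hp, hpU, hpe, hchord⟩ := p.exists_isPath_chordless_within (E := {s(x, y)}) hpU
    (fun e he h => hpe (Set.mem_singleton_iff.mp h ▸ he))
  replace hpe : s(x, y) ∉ p.edges := fun h => hpe _ h rfl
  have hxy' : G.Adj x y := c.adj_of_mem_edges hxy
  by_cases hlen : 3 ≤ p.length
  · exfalso
    have hD : IsHole G (cons hxy' p) := isHole_cons hxy' hp hpe hlen hchord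
    have hsame := (hG _ _ _ _ hD hc).resolve_right fun h => h _ (by simp) hxy
    obtain ⟨r, hr⟩ := hc.exists_mem_edges hq
    have hqD : q ∈ (cons hxy' p).support :=
      fst_mem_support_of_mem_edges _ (show s(q, r) ∈ {e | e ∈ (cons hxy' p).edges} from hsame ▸ hr)
    rw [support_cons, List.mem_cons] at hqD
    exact hqU (hpU q (hqD.elim (· ▸ p.end_mem_support) id))
  · have hnil : ¬ p.Nil := fun h => hxy'.ne (h.eq).symm
    refine ⟨p.snd, hpU _ (p.getVert_mem_support 1), ?_, p.adj_snd hnil⟩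
    have := not_nil_iff_lt_length.mp hnil
    interval_cases h : p.length
    · exact absurd (p.mem_edges_of_length_eq_one h) (Sym2.eq_swap ▸ hpe)
    · have := p.adj_penultimate hnil
      simp only [penultimate, h] at this
      exact this.symm

lemma snd_adj_snd (hG : HoleEdgeDisjoint G) {a b : V} {c : G.Walk a a}
    (hc : IsHole G c) (hb : b ∈ c.support) (hne : a ≠ b) (hab : ¬ G.Adj a b)
    {W : G.Walk a b} (hW : W.IsPath) (hWc : W.IsChordless)
    (hWC : ∀ z ∈ W.support, z ≠ a → z ≠ b → z ∉ c.support) : G.Adj W.snd c.snd := by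
  classical
  set P := c.takeUntil b hb
  set Q := c.dropUntil b hb
  have hPc : ∀ z ∈ P.support, z ∈ c.support := fun z => (c.support_takeUntil_subset_support hb ·)
  have hP : P.IsPath := hc.1.isPath_takeUntil hb
  have hPnil : ¬ P.Nil := not_nil_of_ne hne
  have hQnil : ¬ Q.Nil := not_nil_of_ne hne.symm
  have haP : a ∉ P.tail.support := by
    have := hP
    rw [← P.cons_tail_eq hPnil, cons_isPath_iff] at this
    exact this.2
  have hdisj : P.support.tail.Disjoint Q.support.tail := by
    have := hc.1.support_nodup
    rw [← c.take_spec hb, tail_support_append] at this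
    exact List.disjoint_of_nodup_append this
  have hqa : Q.snd ≠ a := fun h => hab (h ▸ Q.adj_snd hQnil).symm
  have hqb : Q.snd ≠ b := (Q.adj_snd hQnil).ne.symm
  have hqc : Q.snd ∈ c.support :=
    c.support_dropUntil_subset_support hb (Q.getVert_mem_support 1)
  have hqP : Q.snd ∉ P.support := by
    rw [← cons_tail_support, List.mem_cons]
    rintro (h | h)
    · exact hqa h
    · exact hdisj h (getVert_mem_tail_support hQnil one_ne_zero)
  have hsa : P.snd ≠ a := (P.adj_snd hPnil).ne.symm
  have hsb : P.snd ≠ b := fun h => hab (h ▸ P.adj_snd hPnil)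
  have hsc : P.snd ∈ c.support := hPc _ (P.getVert_mem_support 1)
  have hedge : s(a, P.snd) ∈ c.edges := hc.2.2 _ c.start_mem_support _ hsc (P.adj_snd hPnil)
  have hWedge : s(a, P.snd) ∉ W.edges := fun h =>
    hWC _ (W.snd_mem_support_of_mem_edges h) hsa hsb hsc
  obtain ⟨z, hz, haz, hsz⟩ := hG.exists_common_adj hc hedge
    (U := {z | z ∈ P.support ∨ z ∈ W.support}) hqc (by rintro (h | h); exacts [hqP h, hWC _ h hqa hqb hqc]) (P.tail.append W.reverse)
    (by
      intro z hz
      rw [mem_support_append_iff, support_tail_of_not_nil _ hPnil, support_reverse,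
        List.mem_reverse] at hz
      exact hz.imp List.mem_of_mem_tail id)
    (by
      rw [edges_append, List.mem_append, edges_reverse, List.mem_reverse]
      rintro (h | h)
      exacts [haP (P.tail.fst_mem_support_of_mem_edges h), hWedge h])
  rcases hz with hz | hz
  · exact absurd hsz (hc.not_adj_of_adj_of_adj c.start_mem_support hsc (hPc _ hz)
      (P.adj_snd hPnil) haz)
  · have : W.snd = z := hW.snd_of_toSubgraph_adj
      (adj_toSubgraph_iff_mem_edges.mpr (hWc.mem_edges W.start_mem_support hz haz))
    rw [this, ← c.snd_takeUntil hne.symm hb]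
    exact hsz.symm

lemma snd_adj_of_mem_edges (hG : HoleEdgeDisjoint G) (hc : IsHole G c) {a b : V}
    (ha : a ∈ c.support) (hb : b ∈ c.support) (hne : a ≠ b) (hab : ¬ G.Adj a b)
    {W : G.Walk a b} (hW : W.IsPath) (hWc : W.IsChordless)
    (hWC : ∀ z ∈ W.support, z ≠ a → z ≠ b → z ∉ c.support) {a' : V}
    (ha' : s(a, a') ∈ c.edges) : G.Adj W.snd a' := by
  classical
  have hd := hc.rotate ha
  have hWd : ∀ z ∈ W.support, z ≠ a → z ≠ b → z ∉ (c.rotate a ha).support := by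
    simpa only [mem_support_rotate_iff] using hWC
  have hb' : b ∈ (c.rotate a ha).support := (mem_support_rotate_iff ..).mpr hb
  rcases hd.1.mem_edges_start_iff.mp ((c.rotate_edges a ha).mem_iff.mpr ha') with rfl | rfl
  · exact hG.snd_adj_snd hd hb' hne hab hW hWc hWd
  · rw [← snd_reverse]
    exact hG.snd_adj_snd hd.reverse (by simpa using hb') hne hab hW hWc (by simpa using hWd)

lemma mem_holeNbrs_of_adj_of_adj (hG : HoleEdgeDisjoint G) (hc : IsHole G c) {u : V}
    (hu : u ∉ c.support) (hx : x ∈ c.support) (hy : y ∈ c.support) (hux : G.Adj u x)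
    (huy : G.Adj u y) (hne : x ≠ y) (hxy : ¬ G.Adj x y) : u ∈ holeNbrs G c := by
  classical
  have hspread : ∀ w ∈ c.support, ∀ t ∈ c.support, G.Adj u w → G.Adj u t → w ≠ t →
      ¬ G.Adj w t → ∀ w', s(w, w') ∈ c.edges → G.Adj u w' := by
    intro w hw t ht huw hut hwt hwt' w' hw'
    refine hG.snd_adj_of_mem_edges hc hw ht hwt hwt' (W := cons huw.symm (cons hut nil))
      ?_ ?_ ?_ hw'
    · simp [huw.ne.symm, hut.ne, hwt]
    · simp only [isChordless_iff_forall_mem_edges, support_cons, support_nil, List.mem_cons,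
        List.not_mem_nil, or_false, edges_cons, edges_nil]
      grind [SimpleGraph.irrefl, Adj.symm]
    · simp only [support_cons, support_nil, List.mem_cons, List.not_mem_nil]
      rintro z (rfl | rfl | rfl | h) <;> simp_all
  intro z hz
  by_contra huz
  obtain ⟨⟨⟨w, w'⟩, hww'⟩, hd, huw, huw'⟩ := ((c.rotate x hx).takeUntil z
    ((mem_support_rotate_iff ..).mpr hz)).exists_boundary_dart {w | G.Adj u w} hux huz
  have hww' : s(w, w') ∈ c.edges := (c.rotate_edges x hx).mem_iff.mp
    (edges_takeUntil_subset_edges _ _ (by rw [edges_eq_map_darts]; exact List.mem_map_of_mem hd))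
  have hw : w ∈ c.support := c.fst_mem_support_of_mem_edges hww'
  have hnear : ∀ t ∈ c.support, G.Adj u t → t = w ∨ G.Adj w t := fun t ht hut => by
    by_contra! h
    exact huw' (hspread w hw t ht huw hut h.1.symm h.2 w' hww')
  rcases hnear x hx hux with rfl | hwx <;> rcases hnear y hy huy with rfl | hwy
  · exact hne rfl
  · exact hxy hwy
  · exact hxy hwx.symm
  · rcases hc.1.eq_or_eq_or_eq_of_mem_edges hw (hc.2.2 _ hw _ hx hwx) (hc.2.2 _ hw _ hy hwy) hww'
      with h | h | h
    · exact hne h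
    · exact huw' (h ▸ hux)
    · exact huw' (h ▸ huy)

lemma snd_mem_holeNbrs (hG : HoleEdgeDisjoint G) (hc : IsHole G c) {a b : V}
    (ha : a ∈ c.support) (hb : b ∈ c.support) (hne : a ≠ b) (hab : ¬ G.Adj a b)
    {W : G.Walk a b} (hW : W.IsPath) (hWc : W.IsChordless)
    (hWC : ∀ z ∈ W.support, z ≠ a → z ≠ b → z ∉ c.support) : W.snd ∈ holeNbrs G c := by
  classical
  have hnil : ¬ W.Nil := not_nil_of_ne hne
  obtain ⟨x, y, hx, hy, hxy, hxy'⟩ := hc.exists_nonadj_nbrs ha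
  exact hG.mem_holeNbrs_of_adj_of_adj hc (hWC _ (W.getVert_mem_support 1) (W.adj_snd hnil).ne.symm
      fun h => hab (h ▸ W.adj_snd hnil))
    (c.snd_mem_support_of_mem_edges hx) (c.snd_mem_support_of_mem_edges hy)
    (hG.snd_adj_of_mem_edges hc ha hb hne hab hW hWc hWC hx)
    (hG.snd_adj_of_mem_edges hc ha hb hne hab hW hWc hWC hy) hxy hxy'

end HoleEdgeDisjoint

end

theorem no_C_avoiding_path_between_nonadjacent_hole_vertices_general
    {V : Type u} (G : SimpleGraph V) (hhed : HoleEdgeDisjoint G)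
    {v : V} (c : G.Walk v v) (hc : IsHole G c)
    {a b : V} (ha : a ∈ c.support) (hb : b ∈ c.support)
    (hne : a ≠ b) (hnadj : ¬ G.Adj a b) (W : G.Walk a b) :
    ¬ IsCAvoidingPath G c W := by
  rintro ⟨-, hWint, -⟩
  obtain ⟨W, hW, hWU, -, hWc⟩ := W.exists_isPath_chordless_within
    (U := {z | z ∉ avoidSet G c} ∪ {a, b}) (E := ∅)
    (fun z hz => by
      by_cases h : z = a ∨ z = b
      · exact .inr h
      · exact .inl (hWint z hz (fun h' => h (.inl h')) (fun h' => h (.inr h'))))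
    (fun _ _ => Set.notMem_empty _)
  have hint : ∀ z ∈ W.support, z ≠ a → z ≠ b → z ∉ avoidSet G c := fun z hz hza hzb =>
    (hWU z hz).resolve_right (by rintro (h | h); exacts [hza h, hzb h])
  have hnil : ¬ W.Nil := not_nil_of_ne hne
  refine hint _ (W.getVert_mem_support 1) (W.adj_snd hnil).ne.symm
    (fun h => hnadj (h ▸ W.adj_snd hnil)) (.inr ?_)
  exact hhed.snd_mem_holeNbrs hc ha hb hne hnadj hW
    (isChordless_iff_forall_mem_edges.mpr fun z w hz hw h => hWc z hz w hw h (Set.notMem_empty _))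
    fun z hz hza hzb h => hint z hz hza hzb (.inl h)

/-- In a `K_{2,2,2}`-free hole-edge-disjoint graph, there is no `C`-avoiding
path between two non-adjacent vertices of a hole `C`. -/
theorem no_C_avoiding_path_between_nonadjacent_hole_vertices
    {V : Type u} (G : SimpleGraph V) (hfree : K222Free G) (hhed : HoleEdgeDisjoint G)
    {v : V} (c : G.Walk v v) (hc : IsHole G c)
    {a b : V} (ha : a ∈ c.support) (hb : b ∈ c.support)
    (hne : a ≠ b) (hnadj : ¬ G.Adj a b) (W : G.Walk a b) :
    ¬ IsCAvoidingPath G c W :=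
  no_C_avoiding_path_between_nonadjacent_hole_vertices_general G hhed c hc ha hb hne hnadj W
end

section
/- Let G be a K_{2,2,2}-free hole-edge-disjoint simple graph and let C be a hole of G. Then the set X_C of vertices adjacent to every vertex of C is a clique of G. -/
open SimpleGraph

universe u

/-!
Let `x, y ∈ X_C` be distinct and nonadjacent, and let `v₀ v₁ v₂ …` be the hole `C`. Whenever
`p, q` are distinct nonadjacent vertices of `C`, the square `x p y q` is a hole. If `C` has
length 4, then `{x, y}, {v₀, v₂}, {v₁, v₃}` span an induced `K_{2,2,2}`. If `C` is longer, `v₀`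
is nonadjacent to both `v₂` and `v₃`, so the holes `x v₀ y v₂` and `x v₀ y v₃` share the edge
`x v₀` without having the same edges, contradicting hole-edge-disjointness.
-/

section

variable {V : Type u} {G : SimpleGraph V}

def squareWalk {x p y q : V} (hxp : G.Adj x p) (hpy : G.Adj p y) (hyq : G.Adj y q)
    (hqx : G.Adj q x) : G.Walk x x :=
  .cons hxp (.cons hpy (.cons hyq (.cons hqx .nil)))

theorem isHole_squareWalk {x p y q : V} (hxp : G.Adj x p) (hpy : G.Adj p y) (hyq : G.Adj y q)
    (hqx : G.Adj q x) (hxy : x ≠ y) (hpq : p ≠ q) (hnxy : ¬ G.Adj x y) (hnpq : ¬ G.Adj p q) :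
    IsHole G (squareWalk hxp hpy hyq hqx) := by
  have := hxp.ne; have := hpy.ne; have := hyq.ne; have := hqx.ne; have := hxp.ne.symm
  refine ⟨?_, le_rfl, ?_⟩
  · rw [squareWalk, Walk.cons_isCycle_iff]
    simp [*, Ne.symm hxy]
  · intro a ha b hb hab
    simp only [squareWalk, Walk.support_cons, Walk.support_nil, List.mem_cons,
      List.not_mem_nil, or_false] at ha hb
    rcases ha with rfl | rfl | rfl | rfl | rfl <;> rcases hb with rfl | rfl | rfl | rfl | rfl <;>
      simp_all [squareWalk, G.adj_comm]

theorem IsHole.not_adj_getVert {v : V} {c : G.Walk v v} (hc : IsHole G c) {i j : ℕ}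
    (hij : i + 2 ≤ j) (hj : j < c.length) (hji : j + 2 ≤ c.length + i) :
    ¬ G.Adj (c.getVert i) (c.getVert j) := by
  obtain ⟨hcyc, -, hchord⟩ := hc
  intro hadj
  have hsub : c.toSubgraph.Adj (c.getVert i) (c.getVert j) :=
    Walk.adj_toSubgraph_iff_mem_edges.mpr
      (hchord _ (c.getVert_mem_support i) _ (c.getVert_mem_support j) hadj)
  have hinj : ∀ k ≤ c.length - 1, c.getVert j = c.getVert k → j = k := fun k hk h =>
    hcyc.getVert_injOn' (by simp only [Set.mem_ofPred_eq]; omega) hk h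
  rcases i with _ | i
  · have hmem : c.getVert j ∈ c.toSubgraph.neighborSet v := by simpa using hsub
    rw [hcyc.neighborSet_toSubgraph_endpoint] at hmem
    rcases hmem with h | h <;> have := hinj _ (by omega) h <;> omega
  · have hmem : c.getVert j ∈ c.toSubgraph.neighborSet (c.getVert (i + 1)) := hsub
    rw [hcyc.neighborSet_toSubgraph_internal (by omega) (by omega)] at hmem
    rcases hmem with h | h <;> have := hinj _ (by omega) h <;> omega

theorem K222Free.adj_of_forall_adj_square (hG : K222Free G) {S : Set V} {x y p q r s : V}
    (hx : ∀ w ∈ S, G.Adj x w) (hy : ∀ w ∈ S, G.Adj y w) (hxy : x ≠ y)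
    (hp : p ∈ S) (hq : q ∈ S) (hr : r ∈ S) (hs : s ∈ S)
    (hpq : G.Adj p q) (hqr : G.Adj q r) (hrs : G.Adj r s) (hsp : G.Adj s p)
    (hpr : p ≠ r) (hqs : q ≠ s) (hnpr : ¬ G.Adj p r) (hnqs : ¬ G.Adj q s) :
    G.Adj x y := by
  by_contra hnxy
  have := hx p hp; have := hx q hq; have := hx r hr; have := hx s hs
  have := hy p hp; have := hy q hq; have := hy r hr; have := hy s hs
  clear hx hy hp hq hr hs
  refine hG ⟨fun a => ![![x, y], ![p, r], ![q, s]] a.1 a.2, ?_, ?_⟩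
  · rintro ⟨a₁, a₂⟩ ⟨b₁, b₂⟩ h
    fin_cases a₁ <;> fin_cases a₂ <;> fin_cases b₁ <;> fin_cases b₂ <;> simp_all
  · rintro ⟨a₁, a₂⟩ ⟨b₁, b₂⟩
    fin_cases a₁ <;> fin_cases a₂ <;> fin_cases b₁ <;> fin_cases b₂ <;> simp_all [K222, G.adj_comm]

theorem HoleEdgeDisjoint.adj_of_forall_adj_of_not_adj (hG : HoleEdgeDisjoint G) {S : Set V}
    {x y p q r : V} (hx : ∀ w ∈ S, G.Adj x w) (hy : ∀ w ∈ S, G.Adj y w) (hxy : x ≠ y)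
    (hp : p ∈ S) (hq : q ∈ S) (hr : r ∈ S)
    (hpq : p ≠ q) (hpr : p ≠ r) (hqr : q ≠ r) (hnpq : ¬ G.Adj p q) (hnpr : ¬ G.Adj p r) :
    G.Adj x y := by
  by_contra hnxy
  have hxp := hx p hp; have hyp := hy p hp
  have hxq := hx q hq; have hyq := hy q hq
  have hxr := hx r hr; have hyr := hy r hr
  have h₁ := isHole_squareWalk hxp hyp.symm hyq hxq.symm hxy hpq hnxy hnpq
  have h₂ := isHole_squareWalk hxp hyp.symm hyr hxr.symm hxy hpr hnxy hnpr
  rcases hG x x _ _ h₁ h₂ with heq | hdisj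
  · have : s(y, q) ∈ {e | e ∈ (squareWalk hxp hyp.symm hyr hxr.symm).edges} :=
      heq ▸ (by simp [squareWalk])
    simp [squareWalk, hxy.symm, hyp.ne, hpq.symm, hqr, hyr.ne] at this
  · exact hdisj s(x, p) (by simp [squareWalk]) (by simp [squareWalk])

end

/-- In a `K_{2,2,2}`-free hole-edge-disjoint graph, the set `X_C` of vertices
adjacent to every vertex of a hole `C` is a clique. -/
theorem holeNbrs_isClique
    {V : Type u} (G : SimpleGraph V) (hfree : K222Free G) (hhed : HoleEdgeDisjoint G)
    {v : V} (c : G.Walk v v) (hc : IsHole G c) :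
    G.IsClique (holeNbrs G c) := by
  intro x hx y hy hxy
  let S : Set V := {u | u ∈ c.support}
  have hS (i : ℕ) : c.getVert i ∈ S := c.getVert_mem_support i
  have hne {i j : ℕ} (hij : i < j) (hj : j < c.length) : c.getVert i ≠ c.getVert j :=
    hc.1.getVert_injOn'.ne (by simp only [Set.mem_ofPred_eq]; omega)
      (by simp only [Set.mem_ofPred_eq]; omega) (by omega)
  rcases hc.2.1.eq_or_lt with hlen4 | hlong
  · have h30 : G.Adj (c.getVert 3) (c.getVert 0) := by
      simpa [hlen4] using c.adj_getVert_succ (i := 3) (by omega)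
    exact hfree.adj_of_forall_adj_square hx hy hxy (hS 0) (hS 1) (hS 2) (hS 3)
      (c.adj_getVert_succ (by omega)) (c.adj_getVert_succ (by omega))
      (c.adj_getVert_succ (by omega)) h30 (hne (by omega) (by omega)) (hne (by omega) (by omega))
      (hc.not_adj_getVert (by omega) (by omega) (by omega))
      (hc.not_adj_getVert (by omega) (by omega) (by omega))
  · exact hhed.adj_of_forall_adj_of_not_adj hx hy hxy (hS 0) (hS 2) (hS 3)
      (hne (by omega) (by omega)) (hne (by omega) (by omega)) (hne (by omega) (by omega))
      (hc.not_adj_getVert (by omega) (by omega) (by omega))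
      (hc.not_adj_getVert (by omega) (by omega) (by omega))
end

section
/- Let G be a hole-edge-disjoint simple graph, let C be a hole of G, and let e = uv be an edge of C. Then S_{C,e} is nonempty if and only if T_{C,e} is nonempty. -/
open SimpleGraph

universe u

/-! A shortest `C`-avoiding `(a, b)`-path `W` of length at least two has no chord other than `ab`,
since a chord would shortcut it. So if `W` had length at least three, `ab` followed by `W` would
be a hole sharing the edge `ab` with `C`; hole-edge-disjointness would then force it to have the
same edges as `C`, yet the first edge of `W` leaves `V(C)`. -/

namespace SimpleGraph.Walk

variable {V : Type*} {G : SimpleGraph V} {u v : V}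

theorem two_le_length_of_mem_support {p : G.Walk u v} {w : V} (hw : w ∈ p.support)
    (hwu : w ≠ u) (hwv : w ≠ v) : 2 ≤ p.length := by
  rcases p with _ | ⟨_, _ | ⟨_, _⟩⟩ <;> simp_all

theorem two_le_length_of_notMem_edges {p : G.Walk u v} (huv : u ≠ v)
    (h : s(u, v) ∉ p.edges) : 2 ≤ p.length := by
  rcases p with _ | ⟨_, _ | ⟨_, _⟩⟩ <;> simp_all

theorem exists_eq_append_append_of_mem_support (p : G.Walk u v) {x y : V}
    (hx : x ∈ p.support) (hy : y ∈ p.support) :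
    (∃ (p₁ : G.Walk u x) (p₂ : G.Walk x y) (p₃ : G.Walk y v), p = (p₁.append p₂).append p₃) ∨
      ∃ (p₁ : G.Walk u y) (p₂ : G.Walk y x) (p₃ : G.Walk x v),
        p = (p₁.append p₂).append p₃ := by
  classical
  by_cases hy' : y ∈ (p.dropUntil x hx).support
  · refine .inl ⟨p.takeUntil x hx, (p.dropUntil x hx).takeUntil y hy',
      (p.dropUntil x hx).dropUntil y hy', ?_⟩
    rw [← append_assoc, take_spec, take_spec]
  · have hy'' : y ∈ (p.takeUntil x hx).support := by
      rw [← p.take_spec hx, mem_support_append_iff] at hy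
      exact hy.resolve_right hy'
    refine .inr ⟨(p.takeUntil x hx).takeUntil y hy'', (p.takeUntil x hx).dropUntil y hy'',
      p.dropUntil x hx, ?_⟩
    rw [take_spec, take_spec]

theorem IsChord.exists_length_lt {p : G.Walk u v} {x y : V} (h : p.IsChord s(x, y)) :
    ∃ q : G.Walk u v, q.length < p.length ∧ q.support ⊆ p.support ∧
      q.edges ⊆ s(x, y) :: p.edges := by
  obtain ⟨hxy, hne, hx, hy⟩ := isChord_sym2Mk.mp h
  wlog hp : ∃ (p₁ : G.Walk u x) (p₂ : G.Walk x y) (p₃ : G.Walk y v),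
      p = (p₁.append p₂).append p₃ generalizing x y
  · rw [Sym2.eq_swap] at h hne ⊢
    exact this h hxy.symm hne hy hx
      ((p.exists_eq_append_append_of_mem_support hx hy).resolve_left hp)
  obtain ⟨p₁, p₂, p₃, rfl⟩ := hp
  refine ⟨p₁.append (cons hxy p₃), ?_, ?_, ?_⟩
  · have := two_le_length_of_notMem_edges (p := p₂) hxy.ne (fun h => hne (by simp [h]))
    simp only [length_append, length_cons]
    omega
  · intro z
    simp only [mem_support_append_iff, support_cons, List.mem_cons]
    rintro (h | rfl | h)
    exacts [.inl (.inl h), .inl (.inr p₂.start_mem_support), .inr h]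
  · intro e
    simp only [edges_append, edges_cons, List.mem_append, List.mem_cons]
    tauto

end SimpleGraph.Walk

section

variable {V : Type u} {G : SimpleGraph V} {v : V} {c : G.Walk v v} {a b : V}

theorem IsCAvoidingPath.exists_mem_edges_notMem_edges {W : G.Walk a b}
    (hW : IsCAvoidingPath G c W) (hW2 : 2 ≤ W.length) : ∃ e ∈ W.edges, e ∉ c.edges := by
  have hnil : ¬ W.Nil := Walk.not_nil_iff_lt_length.mpr (by omega)
  refine ⟨_, W.mk_start_snd_mem_edges hnil, fun h => ?_⟩
  have hsnd : W.snd ≠ b := fun h => by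
    have := (hW.1.getVert_eq_end_iff (i := 1) (by omega)).mp h
    omega
  exact hW.2.1 _ (W.getVert_mem_support 1) (W.adj_snd hnil).ne' hsnd
    (Or.inl (c.snd_mem_support_of_mem_edges h))

theorem IsCAvoidingPath.not_isChord_of_minimal {W : G.Walk a b} (hW : IsCAvoidingPath G c W)
    (hW2 : 2 ≤ W.length)
    (hmin : ∀ W' : G.Walk a b, IsCAvoidingPath G c W' → 2 ≤ W'.length → W.length ≤ W'.length)
    {x y : V} (hxy : s(x, y) ≠ s(a, b)) : ¬ W.IsChord s(x, y) := by
  classical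
  intro hchord
  obtain ⟨q, hlt, hsupp, hedges⟩ := hchord.exists_length_lt
  have hab : a ≠ b := by
    rintro rfl
    have := Walk.length_eq_zero_iff.mpr (Walk.isPath_iff_nil.mp hW.1)
    omega
  have hsab : s(a, b) ∉ W.edges := fun h => by
    have := hW.1.length_eq_one_of_mem_edges h
    omega
  have hq2 : 2 ≤ q.bypass.length := by
    refine Walk.two_le_length_of_notMem_edges hab fun h => ?_
    rcases List.mem_cons.mp (hedges (q.edges_bypass_subset_edges h)) with h | h
    exacts [hxy h.symm, hsab h]
  have hq : IsCAvoidingPath G c q.bypass :=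
    ⟨q.bypass_isPath, fun z hz => hW.2.1 z (hsupp (q.support_bypass_subset_support hz)),
      fun h => by omega⟩
  have := q.length_bypass_le_length
  have := hmin _ hq hq2
  omega

theorem IsCAvoidingPath.isHole_cons_reverse_of_minimal (hab : G.Adj a b) {W : G.Walk a b}
    (hW : IsCAvoidingPath G c W) (hW3 : 3 ≤ W.length)
    (hmin : ∀ W' : G.Walk a b, IsCAvoidingPath G c W' → 2 ≤ W'.length → W.length ≤ W'.length) :
    IsHole G (Walk.cons hab W.reverse) := by
  have hsab : s(a, b) ∉ W.edges := fun h => by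
    have := hW.1.length_eq_one_of_mem_edges h
    omega
  refine ⟨?_, by simp only [Walk.length_cons, Walk.length_reverse]; omega, ?_⟩
  · rw [Walk.cons_isCycle_iff, Walk.edges_reverse, List.mem_reverse]
    exact ⟨hW.1.reverse, hsab⟩
  · intro x hx y hy hxy
    by_contra hchord
    simp only [Walk.support_cons, Walk.support_reverse, List.mem_cons, List.mem_reverse,
      Walk.edges_cons, Walk.edges_reverse, not_or] at hx hy hchord
    replace hx : x ∈ W.support := hx.elim (· ▸ W.start_mem_support) id
    replace hy : y ∈ W.support := hy.elim (· ▸ W.start_mem_support) id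
    exact hW.not_isChord_of_minimal (by omega) hmin hchord.1
      (Walk.isChord_sym2Mk.mpr ⟨hxy, hchord.2, hx, hy⟩)

theorem IsCAvoidingPath.length_eq_two_of_minimal (hhed : HoleEdgeDisjoint G) (hc : IsHole G c)
    (he : s(a, b) ∈ c.edges) {W : G.Walk a b} (hW : IsCAvoidingPath G c W) (hW2 : 2 ≤ W.length)
    (hmin : ∀ W' : G.Walk a b, IsCAvoidingPath G c W' → 2 ≤ W'.length → W.length ≤ W'.length) :
    W.length = 2 := by
  by_contra hne
  have hD := hW.isHole_cons_reverse_of_minimal (c.adj_of_mem_edges he) (by omega) hmin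
  obtain ⟨e, heW, hec⟩ := hW.exists_mem_edges_notMem_edges hW2
  rcases hhed _ _ c _ hc hD with hCD | hCD
  · exact hec ((Set.ext_iff.mp hCD e).mpr (by simp [heW]))
  · exact hCD _ he (by simp)

theorem IsCAvoidingPath.Tset_nonempty_of_length_eq_two {W : G.Walk a b}
    (hW : IsCAvoidingPath G c W) (hW2 : W.length = 2) : (Tset G c a b).Nonempty := by
  rcases W with _ | ⟨h₁, _ | ⟨h₂, _ | _⟩⟩
  · simp at hW2
  · simp at hW2
  · exact ⟨_, h₁, h₂, hW⟩
  · simp at hW2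

end

/-- In a hole-edge-disjoint graph, `S_{C,e} ≠ ∅` iff `T_{C,e} ≠ ∅`. -/
theorem Sset_nonempty_iff_Tset_nonempty
    {V : Type u} (G : SimpleGraph V) (hhed : HoleEdgeDisjoint G)
    {v : V} (c : G.Walk v v) (hc : IsHole G c)
    {a b : V} (he : s(a, b) ∈ c.edges) :
    (Sset G c a b).Nonempty ↔ (Tset G c a b).Nonempty := by
  constructor
  · rintro ⟨w, W₀, hW₀, hw, hwa, hwb⟩
    obtain ⟨W, ⟨hW, hW2⟩, hmin⟩ := (InvImage.wf Walk.length wellFounded_lt).has_min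
      {W : G.Walk a b | IsCAvoidingPath G c W ∧ 2 ≤ W.length}
      ⟨W₀, hW₀, Walk.two_le_length_of_mem_support hw hwa hwb⟩
    exact hW.Tset_nonempty_of_length_eq_two <| hW.length_eq_two_of_minimal hhed hc he hW2
      fun W' hW' hW'2 => not_lt.mp (hmin W' ⟨hW', hW'2⟩)
  · rintro ⟨w, h₁, h₂, hW⟩
    exact ⟨w, _, hW, by simp, h₁.ne', h₂.ne⟩
end

section
/- Let G be a finite simple graph and k a nonnegative integer. Suppose G has a subgraph G1 with competition number k(G1) ≤ k and a chordal subgraph G2 such that E(G1) ∪ E(G2) = E(G) and V(G1) ∩ V(G2) is a clique of G2. Then k(G) ≤ k + 1. -/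
open SimpleGraph

universe u

/-!
Realise `G₁` together with `k` isolated vertices as the competition graph of an acyclic
digraph. For the chordal part, repeatedly delete a vertex outside the clique
`K = V(G₁) ∩ V(G₂)` that is simplicial in what is left (one exists by Dirac's separator
argument) until only vertices of `K` remain. The first deleted vertex and its remaining
neighbours prey on one new vertex, each later deleted vertex and its remaining neighbours
prey on the previously deleted vertex, and what is left of `K` preys on the last one. All
these prey lie outside `V(G₁)`, so the two digraphs overlay to an acyclic digraph whose
competition graph is `G` together with `k + 1` isolated vertices.
-/

open Function

section Digraph

variable {α β : Type*}

theorem IsAcyclicDigraph.of_rank {r : α → α → Prop} (f : α → ℕ)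
    (hf : ∀ x y, r x y → f y < f x) : IsAcyclicDigraph r := by
  have key : ∀ x y, Relation.TransGen r x y → f y < f x := by
    intro x y h
    induction h with
    | single h => exact hf _ _ h
    | tail _ h ih => exact (hf _ _ h).trans ih
  exact fun x hx => lt_irrefl _ (key x x hx)

theorem IsAcyclicDigraph.map {r : α → α → Prop} (hr : IsAcyclicDigraph r) {f : α → β}
    (hf : f.Injective) : IsAcyclicDigraph (Relation.Map r f f) := by
  intro x hx
  obtain ⟨-, ⟨a, -⟩, -⟩ := Relation.TransGen.head'_iff.mp hx
  have : Nonempty α := ⟨a⟩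
  refine hr _ (hx.lift (invFun f) ?_)
  rintro _ _ ⟨a, b, hab, rfl, rfl⟩
  show r (invFun f (f a)) (invFun f (f b))
  rwa [leftInverse_invFun hf a, leftInverse_invFun hf b]

theorem IsAcyclicDigraph.sup {r₁ r₂ : α → α → Prop} (h₁ : IsAcyclicDigraph r₁)
    (h₂ : IsAcyclicDigraph r₂) (h : ∀ x y z, r₂ x y → ¬ r₁ y z) :
    IsAcyclicDigraph (r₁ ⊔ r₂) := by
  -- once a walk takes an `r₂`-arc it can only continue with `r₂`-arcs
  have key : ∀ x y, Relation.TransGen (r₁ ⊔ r₂) x y →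
      Relation.TransGen r₁ x y ∨ ∃ m, Relation.ReflTransGen r₁ x m ∧ Relation.TransGen r₂ m y := by
    intro x y hxy
    induction hxy with
    | single hxy =>
      rcases hxy with hxy | hxy
      · exact .inl (.single hxy)
      · exact .inr ⟨x, .refl, .single hxy⟩
    | tail _ hyz ih =>
      rcases hyz with hyz | hyz
      · rcases ih with ih | ⟨m, -, hmy⟩
        · exact .inl (ih.tail hyz)
        · obtain ⟨b, -, hby⟩ := Relation.TransGen.tail'_iff.mp hmy
          exact (h _ _ _ hby hyz).elim
      · rcases ih with ih | ⟨m, hxm, hmy⟩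
        · exact .inr ⟨_, ih.to_reflTransGen, .single hyz⟩
        · exact .inr ⟨m, hxm, hmy.tail hyz⟩
  intro x hx
  rcases key x x hx with hx | ⟨m, hxm, hmx⟩
  · exact h₁ x hx
  rcases hxm.cases_head with rfl | ⟨c, hxc, -⟩
  · exact h₂ x hmx
  obtain ⟨b, -, hbx⟩ := Relation.TransGen.tail'_iff.mp hmx
  exact h _ _ _ hbx hxc

def competitionGraph (r : α → α → Prop) : SimpleGraph α where
  Adj a b := a ≠ b ∧ ∃ x, r a x ∧ r b x
  symm := ⟨fun _ _ ⟨hne, x, ha, hb⟩ => ⟨hne.symm, x, hb, ha⟩⟩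
  loopless := ⟨fun _ h => h.1 rfl⟩

@[simp]
theorem competitionGraph_adj {r : α → α → Prop} {a b : α} :
    (competitionGraph r).Adj a b ↔ a ≠ b ∧ ∃ x, r a x ∧ r b x :=
  Iff.rfl

theorem isCompetitionGraphOfAcyclicDigraph_iff {H : SimpleGraph α} :
    IsCompetitionGraphOfAcyclicDigraph H ↔ ∃ r, IsAcyclicDigraph r ∧ competitionGraph r = H := by
  simp only [IsCompetitionGraphOfAcyclicDigraph, SimpleGraph.ext_iff, funext_iff,
    competitionGraph_adj, eq_iff_iff, iff_comm]

theorem competitionGraph_sup {r₁ r₂ : α → α → Prop} (h : ∀ x y z, r₁ x z → ¬ r₂ y z) :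
    competitionGraph (r₁ ⊔ r₂) = competitionGraph r₁ ⊔ competitionGraph r₂ := by
  ext a b
  simp only [SimpleGraph.sup_adj, competitionGraph_adj, Pi.sup_apply, sup_Prop_eq]
  constructor
  · rintro ⟨hne, x, ha | ha, hb | hb⟩
    exacts [.inl ⟨hne, x, ha, hb⟩, (h _ _ _ ha hb).elim, (h _ _ _ hb ha).elim,
      .inr ⟨hne, x, ha, hb⟩]
  · rintro (⟨hne, x, ha, hb⟩ | ⟨hne, x, ha, hb⟩)
    exacts [⟨hne, x, .inl ha, .inl hb⟩, ⟨hne, x, .inr ha, .inr hb⟩]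

theorem competitionGraph_map {r : α → α → Prop} {f : α → β} (hf : f.Injective) :
    competitionGraph (Relation.Map r f f) = (competitionGraph r).map f := by
  ext a b
  rw [competitionGraph_adj, SimpleGraph.map_adj']
  constructor
  · rintro ⟨hne, _, ⟨a, x, ha, rfl, rfl⟩, ⟨b, x', hb, rfl, hx⟩⟩
    rw [hf hx] at hb
    exact ⟨hne, a, b, ⟨fun h => hne (congrArg f h), x, ha, hb⟩, rfl, rfl⟩
  · rintro ⟨hne, a, b, ⟨-, x, ha, hb⟩, rfl, rfl⟩
    exact ⟨hne, f x, ⟨a, x, ha, rfl, rfl⟩, ⟨b, x, hb, rfl, rfl⟩⟩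

theorem IsCompetitionGraphOfAcyclicDigraph.map {H : SimpleGraph α}
    (h : IsCompetitionGraphOfAcyclicDigraph H) {f : α → β} (hf : f.Injective) :
    IsCompetitionGraphOfAcyclicDigraph (H.map f) := by
  obtain ⟨r, hr, rfl⟩ := isCompetitionGraphOfAcyclicDigraph_iff.mp h
  exact isCompetitionGraphOfAcyclicDigraph_iff.mpr ⟨_, hr.map hf, competitionGraph_map hf⟩

theorem isCompetitionGraphOfAcyclicDigraph_sup {r₁ r₂ : α → α → Prop}
    (h₁ : IsAcyclicDigraph r₁) (h₂ : IsAcyclicDigraph r₂)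
    (h : ∀ x y z, r₂ x y → ¬ r₁ y z ∧ ¬ r₁ z y) :
    IsCompetitionGraphOfAcyclicDigraph (competitionGraph r₁ ⊔ competitionGraph r₂) :=
  isCompetitionGraphOfAcyclicDigraph_iff.mpr ⟨r₁ ⊔ r₂, h₁.sup h₂ fun x y z hxy => (h x y z hxy).1,
    competitionGraph_sup fun x y z hxz hyz => (h y z x hyz).2 hxz⟩

def preyAll (T : Set α) (e : α) : α → α → Prop := fun x z => x ∈ T ∧ z = e

theorem isAcyclicDigraph_preyAll {T : Set α} {e : α} (he : e ∉ T) :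
    IsAcyclicDigraph (preyAll T e) := by
  classical
  exact .of_rank (fun x => if x ∈ T then 1 else 0) fun x z ⟨hx, hz⟩ => by simp [hx, hz, he]

@[simp]
theorem competitionGraph_preyAll_adj {T : Set α} {e x y : α} :
    (competitionGraph (preyAll T e)).Adj x y ↔ x ≠ y ∧ x ∈ T ∧ y ∈ T := by
  simp [preyAll]

theorem isCompetitionGraphOfAcyclicDigraph_map_sup_map {γ : Type*} {r₁ : α → α → Prop}
    {r₂ : β → β → Prop} (h₁ : IsAcyclicDigraph r₁) (h₂ : IsAcyclicDigraph r₂) {f₁ : α → γ}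
    {f₂ : β → γ} (hf₁ : f₁.Injective) (hf₂ : f₂.Injective)
    (h : ∀ x y, r₂ x y → f₂ y ∉ Set.range f₁) :
    IsCompetitionGraphOfAcyclicDigraph
      ((competitionGraph r₁).map f₁ ⊔ (competitionGraph r₂).map f₂) := by
  rw [← competitionGraph_map hf₁, ← competitionGraph_map hf₂]
  refine isCompetitionGraphOfAcyclicDigraph_sup (h₁.map hf₁) (h₂.map hf₂) ?_
  rintro _ _ z ⟨x, y, hxy, rfl, rfl⟩
  exact ⟨fun ⟨a, _, _, ha, _⟩ => h x y hxy ⟨a, ha⟩, fun ⟨_, b, _, _, hb⟩ => h x y hxy ⟨b, hb⟩⟩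

end Digraph

section CompetitionNumber

variable {V : Type*}

theorem addIsolated_eq_map (G : SimpleGraph V) (k : ℕ) : addIsolated G k = G.map Sum.inl := by
  ext a b
  simp only [addIsolated, SimpleGraph.map_adj']
  constructor
  · rintro ⟨x, y, h, rfl, rfl⟩
    exact ⟨by simpa using h.ne, x, y, h, rfl, rfl⟩
  · rintro ⟨-, x, y, h, rfl, rfl⟩
    exact ⟨x, y, h, rfl, rfl⟩

theorem IsCompetitionGraphOfAcyclicDigraph.addIsolated_mono {G : SimpleGraph V} {k m : ℕ}
    (h : IsCompetitionGraphOfAcyclicDigraph (addIsolated G k)) (hkm : k ≤ m) :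
    IsCompetitionGraphOfAcyclicDigraph (addIsolated G m) := by
  rw [addIsolated_eq_map] at h ⊢
  simpa [SimpleGraph.map_map, Function.comp_def] using
    h.map (Sum.map_injective.mpr ⟨injective_id, Fin.castLE_injective hkm⟩)

/-- Every edge gets a private prey. -/
theorem exists_isCompetitionGraphOfAcyclicDigraph_addIsolated [Finite V] (G : SimpleGraph V) :
    ∃ k, IsCompetitionGraphOfAcyclicDigraph (addIsolated G k) := by
  let r : V ⊕ G.edgeSet → V ⊕ G.edgeSet → Prop :=
    fun x y => ∃ (u : V) (e : G.edgeSet), u ∈ (e : Sym2 V) ∧ x = .inl u ∧ y = .inr e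
  have hr : IsAcyclicDigraph r :=
    .of_rank (Sum.elim (fun _ => 1) fun _ => 0) fun _ _ ⟨_, _, _, hx, hy⟩ => by simp [hx, hy]
  have hcomp : competitionGraph r = G.map Sum.inl := by
    ext a b
    rw [competitionGraph_adj, SimpleGraph.map_adj']
    constructor
    · rintro ⟨hne, _, ⟨u, e, hu, rfl, rfl⟩, ⟨w, e', hw, rfl, he⟩⟩
      obtain rfl := Sum.inr_injective he
      have huw : u ≠ w := fun h => hne (h ▸ rfl)
      refine ⟨hne, u, w, ?_, rfl, rfl⟩
      rw [← SimpleGraph.mem_edgeSet, ← (Sym2.mem_and_mem_iff huw).mp ⟨hu, hw⟩]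
      exact e.2
    · rintro ⟨hne, u, w, huw, rfl, rfl⟩
      exact ⟨hne, .inr ⟨s(u, w), huw⟩, ⟨u, _, Sym2.mem_mk_left u w, rfl, rfl⟩,
        ⟨w, _, Sym2.mem_mk_right u w, rfl, rfl⟩⟩
  obtain ⟨n, ⟨e⟩⟩ := Finite.exists_equiv_fin G.edgeSet
  have := (isCompetitionGraphOfAcyclicDigraph_iff.mpr ⟨r, hr, hcomp⟩).map
    (Sum.map_injective.mpr ⟨injective_id, e.injective⟩)
  refine ⟨n, ?_⟩
  rw [addIsolated_eq_map]
  simpa [SimpleGraph.map_map, Function.comp_def] using this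

theorem isCompetitionGraphOfAcyclicDigraph_of_compNumber_le [Finite V] {G : SimpleGraph V}
    {k : ℕ} (h : compNumber G ≤ k) : IsCompetitionGraphOfAcyclicDigraph (addIsolated G k) :=
  .addIsolated_mono (Nat.sInf_mem (exists_isCompetitionGraphOfAcyclicDigraph_addIsolated G)) h

end CompetitionNumber

namespace SimpleGraph

variable {V W : Type*}

theorem map_sup (f : V → W) (G₁ G₂ : SimpleGraph V) :
    (G₁ ⊔ G₂).map f = G₁.map f ⊔ G₂.map f := by
  ext a b
  simp only [map_adj', sup_adj]
  constructor
  · rintro ⟨hne, u, v, h | h, rfl, rfl⟩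
    exacts [.inl ⟨hne, u, v, h, rfl, rfl⟩, .inr ⟨hne, u, v, h, rfl, rfl⟩]
  · rintro (⟨hne, u, v, h, rfl, rfl⟩ | ⟨hne, u, v, h, rfl, rfl⟩)
    exacts [⟨hne, u, v, .inl h, rfl, rfl⟩, ⟨hne, u, v, .inr h, rfl, rfl⟩]

theorem Subgraph.map_coe_sup_map_coe {G : SimpleGraph V} {G₁ G₂ : G.Subgraph}
    (hE : G₁.edgeSet ∪ G₂.edgeSet = G.edgeSet) (f : V → W) :
    G₁.coe.map (f ∘ Subtype.val) ⊔ G₂.coe.map (f ∘ Subtype.val) = G.map f := by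
  have hG : G₁.spanningCoe ⊔ G₂.spanningCoe = G := by
    rw [← Subgraph.sup_spanningCoe, ← edgeSet_inj, Subgraph.edgeSet_spanningCoe,
      Subgraph.edgeSet_sup, hE]
  rw [← map_map, ← map_map, ← SimpleGraph.map_sup]
  exact congrArg _ ((congrArg₂ (· ⊔ ·) G₁.spanningCoe_coe G₂.spanningCoe_coe).trans hG)

variable {H : SimpleGraph V} {R : Set V} {b c x : V}

def componentIn (H : SimpleGraph V) (R : Set V) (b : V) : Set V :=
  {x | ∃ w : H.Walk b x, ∀ y ∈ w.support, y ∈ R}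

theorem componentIn_subset : H.componentIn R b ⊆ R :=
  fun _ ⟨w, hw⟩ => hw _ w.end_mem_support

theorem mem_componentIn_self (hb : b ∈ R) : b ∈ H.componentIn R b :=
  ⟨.nil, by simpa using hb⟩

theorem mem_componentIn_of_adj (hc : c ∈ H.componentIn R b) (hx : x ∈ R) (hcx : H.Adj c x) :
    x ∈ H.componentIn R b := by
  obtain ⟨w, hw⟩ := hc
  refine ⟨w.concat hcx, fun y hy => ?_⟩
  rw [Walk.support_concat, List.mem_append, List.mem_singleton] at hy
  exact hy.elim (hw y) (· ▸ hx)

end SimpleGraph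

namespace SimpleGraph.Walk

variable {V : Type*} {G : SimpleGraph V}

theorem exists_length_lt_of_adj {x y : V} (hxy : G.Adj x y) :
    ∀ {u v : V} (p : G.Walk u v), x ∈ p.support → y ∈ p.support → s(x, y) ∉ p.edges →
      ∃ q : G.Walk u v, q.length < p.length ∧ q.support ⊆ p.support := by
  classical
  intro u v p
  induction p with
  | nil =>
    intro hx hy _
    simp only [support_nil, List.mem_singleton] at hx hy
    exact (hxy.ne (hx.trans hy.symm)).elim
  | @cons u z v huz p ih =>
    intro hx hy he
    -- a chord at the first vertex jumps straight to its other end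
    have shortcut : ∀ {w}, G.Adj u w → w ∈ p.support → w ≠ z →
        ∃ q : G.Walk u v, q.length < (cons huz p).length ∧ q.support ⊆ (cons huz p).support :=
      fun huw hw hwz => ⟨cons huw (p.dropUntil _ hw),
        by simpa using length_dropUntil_lt_length hw hwz,
        by simpa using List.cons_subset_cons _ (p.support_dropUntil_subset_support hw)⟩
    simp only [edges_cons, List.mem_cons, not_or] at he
    simp only [support_cons, List.mem_cons] at hx hy
    rcases hx with rfl | hx
    · exact shortcut hxy (hy.resolve_left hxy.ne.symm) fun h => he.1 (h ▸ rfl)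
    rcases hy with rfl | hy
    · exact shortcut hxy.symm hx fun h => he.1 (h ▸ Sym2.eq_swap)
    obtain ⟨q, hlt, hsub⟩ := ih hx hy he.2
    exact ⟨cons huz q, by simpa using hlt, List.cons_subset_cons _ hsub⟩

theorem exists_isPath_isChordless {u v : V} (p : G.Walk u v) :
    ∃ q : G.Walk u v, q.IsPath ∧ q.IsChordless ∧ q.support ⊆ p.support := by
  classical
  induction hn : p.length using Nat.strong_induction_on generalizing p with
  | _ n ih =>
  by_cases hc : p.IsChordless
  · by_cases hpath : p.IsPath
    · exact ⟨p, hpath, hc, List.Subset.refl _⟩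
    have hlt : p.bypass.length < n := by
      refine hn ▸ lt_of_le_of_ne p.length_bypass_le_length fun h => hpath ?_
      rw [← p.bypass_eq_self_of_length_le_length_bypass h.ge]
      exact p.bypass_isPath
    obtain ⟨q, hq, hqc, hsub⟩ := ih _ hlt p.bypass rfl
    exact ⟨q, hq, hqc, List.Subset.trans hsub p.support_bypass_subset_support⟩
  · simp only [isChordless_iff_forall_mem_edges, not_forall] at hc
    obtain ⟨x, y, hx, hy, hxy, he⟩ := hc
    obtain ⟨p', hlt, hsub⟩ := exists_length_lt_of_adj hxy p hx hy he
    obtain ⟨q, hq, hqc, hsub'⟩ := ih _ (hn ▸ hlt) p' rfl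
    exact ⟨q, hq, hqc, List.Subset.trans hsub' hsub⟩

theorem isHole_cons_concat {a s t : V} (has : G.Adj a s) (hat : G.Adj a t) (hst : s ≠ t)
    (hnadj : ¬ G.Adj s t) {q : G.Walk s t} (hq : q.IsPath) (hqc : q.IsChordless)
    (hout : ∀ x ∈ q.support, x = s ∨ x = t ∨ x ≠ a ∧ ¬ G.Adj a x) :
    IsHole G (.cons has (q.concat hat.symm)) := by
  have haq : a ∉ q.support := fun ha => by
    rcases hout a ha with h | h | h
    exacts [has.ne h, hat.ne h, h.1 rfl]
  have hlen : 2 ≤ q.length := by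
    by_contra! h
    interval_cases hl : q.length
    · exact hst (eq_of_length_eq_zero hl)
    · exact hnadj (adj_of_length_eq_one hl)
  set c : G.Walk a a := .cons has (q.concat hat.symm)
  have hedge : ∀ y ∈ q.support, G.Adj a y → s(a, y) ∈ c.edges := fun y hy hay => by
    rcases hout y hy with rfl | rfl | h
    · simp [c]
    · simp [c, edges_concat, Sym2.eq_swap]
    · exact (h.2 hay).elim
  refine ⟨?_, by simp [c]; omega, ?_⟩
  · rw [cons_isCycle_iff]
    refine ⟨hq.concat haq hat.symm, fun h => ?_⟩
    rw [edges_concat, List.concat_eq_append, List.mem_append, List.mem_singleton] at h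
    rcases h with h | h
    · exact haq (q.fst_mem_support_of_mem_edges h)
    · rcases Sym2.eq_iff.mp h with ⟨h, -⟩ | ⟨-, h⟩
      exacts [hat.ne h, hst h]
  · intro x hx y hy hxy
    simp only [c, support_cons, support_concat, List.mem_cons, List.mem_append,
      List.mem_nil_iff, or_false] at hx hy
    have hq_sub : ∀ e ∈ q.edges, e ∈ c.edges := fun e he => by simp [c, edges_concat, he]
    rcases hx with rfl | hx | rfl <;> rcases hy with rfl | hy | rfl
    all_goals first
      | exact (hxy.ne rfl).elim
      | exact hedge _ ‹_› hxy
      | exact Sym2.eq_swap ▸ hedge _ ‹_› hxy.symm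
      | exact hq_sub _ (hqc.mem_edges hx hy hxy)

end SimpleGraph.Walk

/-- `e` is the one prey outside `D`: the extra isolated vertex `none` at the top level, the
previously eliminated vertex further down. -/
structure IsEliminationDigraph {α : Type*} (H : SimpleGraph α) (K D : Set α) (e : Option α)
    (r : Option α → Option α → Prop) : Prop where
  acyclic : IsAcyclicDigraph r
  source : ∀ x z, r x z → x ∈ some '' D
  prey : ∀ x z, r x z → z ∈ insert e (some '' (D \ K))
  adj_iff : ∀ u ∈ D, ∀ w ∈ D, ((competitionGraph r).Adj (some u) (some w) ↔ H.Adj u w)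

namespace IsEliminationDigraph

variable {α : Type*} {H : SimpleGraph α} {K D : Set α} {e : Option α}

theorem preyAll_of_subset (hK : H.IsClique K) (hDK : D ⊆ K) (he : e ∉ some '' D) :
    IsEliminationDigraph H K D e (preyAll (some '' D) e) := by
  refine ⟨isAcyclicDigraph_preyAll he, fun x z h => h.1, fun x z h => .inl h.2,
    fun u hu w hw => ?_⟩
  simp only [competitionGraph_preyAll_adj, (Option.some_injective α).mem_set_image, hu, hw,
    and_true, ne_eq, Option.some.injEq]
  exact ⟨fun hne => hK (hDK hu) (hDK hw) hne, Adj.ne⟩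

theorem sup_preyAll {r : Option α → Option α → Prop} {v : α}
    (hr : IsEliminationDigraph H K (D \ {v}) (some v) r) (hvD : v ∈ D) (hvK : v ∉ K)
    (hvc : H.IsClique (H.neighborSet v ∩ D)) (he : e ∉ some '' D) :
    IsEliminationDigraph H K D e (r ⊔ preyAll (some '' insert v (H.neighborSet v ∩ D)) e) := by
  have hsome := Option.some_injective α
  set T : Set α := insert v (H.neighborSet v ∩ D)
  have hTD : T ⊆ D := Set.insert_subset hvD Set.inter_subset_right
  have hTc : H.IsClique T := hvc.insert fun _ hx _ => hx.1
  have hsource : ∀ x z, r x z → x ∈ some '' D :=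
    fun x z h => Set.image_mono Set.sdiff_subset (hr.source x z h)
  have hprey : ∀ x z, r x z → z ≠ e := by
    rintro x z h rfl
    rcases hr.prey x z h with h | ⟨u, hu, rfl⟩
    exacts [he ⟨v, hvD, h.symm⟩, he ⟨u, hu.1.1, rfl⟩]
  refine ⟨hr.acyclic.sup (isAcyclicDigraph_preyAll fun h => he (Set.image_mono hTD h))
      fun x y z ⟨_, hy⟩ h => he (hy ▸ hsource _ _ h), ?_, ?_, fun u hu w hw => ?_⟩
  · rintro x z (h | ⟨hx, -⟩)
    exacts [hsource x z h, Set.image_mono hTD hx]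
  · rintro x z (h | ⟨-, rfl⟩)
    · rcases hr.prey x z h with rfl | ⟨u, hu, rfl⟩
      exacts [.inr ⟨v, ⟨hvD, hvK⟩, rfl⟩, .inr ⟨u, ⟨hu.1.1, hu.2⟩, rfl⟩]
    · exact .inl rfl
  rw [competitionGraph_sup fun x y z hxz hyz => hprey x z hxz hyz.2, sup_adj,
    competitionGraph_preyAll_adj, hsome.mem_set_image, hsome.mem_set_image, hsome.ne_iff]
  constructor
  · rintro (h | ⟨hne, huT, hwT⟩)
    · obtain ⟨z, huz, hwz⟩ := h.2
      have hu' := hsome.mem_set_image.mp (hr.source _ _ huz)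
      have hw' := hsome.mem_set_image.mp (hr.source _ _ hwz)
      exact (hr.adj_iff u hu' w hw').mp h
    · exact hTc huT hwT hne
  · intro huw
    by_cases huv : u = v
    · exact .inr ⟨huw.ne, .inl huv, .inr ⟨huv ▸ huw, hw⟩⟩
    by_cases hwv : w = v
    · exact .inr ⟨huw.ne, .inr ⟨hwv ▸ huw.symm, hu⟩, .inl hwv⟩
    exact .inl ((hr.adj_iff u ⟨hu, huv⟩ w ⟨hw, hwv⟩).mpr huw)

end IsEliminationDigraph

namespace Chordal

open SimpleGraph Walk

variable {α : Type*} {H : SimpleGraph α}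

theorem adj_of_walk (hH : Chordal H) {a s t : α} (has : H.Adj a s) (hat : H.Adj a t)
    (hst : s ≠ t) (w : H.Walk s t) (hw : ∀ x ∈ w.support, x = s ∨ x = t ∨ x ≠ a ∧ ¬ H.Adj a x) :
    H.Adj s t := by
  by_contra hnadj
  obtain ⟨q, hq, hqc, hsub⟩ := w.exists_isPath_isChordless
  exact hH a _ (isHole_cons_concat has hat hst hnadj hq hqc fun x hx => hw x (hsub hx))

theorem isClique_of_adj_componentIn (hH : Chordal H) {a b : α} {R : Set α}
    (hR : ∀ x ∈ R, x ≠ a ∧ ¬ H.Adj a x) :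
    H.IsClique {s | H.Adj a s ∧ ∃ c ∈ H.componentIn R b, H.Adj c s} := by
  rintro s ⟨has, cs, ⟨ws, hws⟩, hs⟩ t ⟨hat, ct, ⟨wt, hwt⟩, ht⟩ hst
  refine hH.adj_of_walk has hat hst (.cons hs.symm (ws.reverse.append (wt.concat ht)))
    fun x hx => ?_
  simp only [support_cons, List.mem_cons, mem_support_append_iff, support_reverse,
    List.mem_reverse, support_concat, List.mem_append, List.mem_nil_iff, or_false] at hx
  rcases hx with hx | hx | hx | hx
  exacts [.inl hx, .inr (.inr (hR x (hws x hx))), .inr (.inr (hR x (hwt x hx))), .inr (.inl hx)]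

theorem exists_ssubset_of_not_adj (hH : Chordal H) {D : Finset α} {a b : α}
    (ha : a ∈ D) (hb : b ∈ D) (hab : a ≠ b) (hnadj : ¬ H.Adj a b) :
    ∃ D' ⊂ D, ∃ S : Set α, H.IsClique S ∧ b ∈ D' ∧ b ∉ S ∧
      ∀ v ∈ D', v ∉ S → v ≠ a ∧ ¬ H.Adj a v ∧ H.neighborSet v ∩ D ⊆ D' := by
  classical
  set R : Set α := {x | x ∈ D ∧ x ≠ a ∧ ¬ H.Adj a x}
  set C := H.componentIn R b
  set S := {s | H.Adj a s ∧ ∃ c ∈ C, H.Adj c s}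
  have hCR : C ⊆ R := componentIn_subset
  refine ⟨D.filter (fun x => x ∈ C ∨ x ∈ S), ?_, S,
    hH.isClique_of_adj_componentIn fun x hx => hx.2, ?_, fun h => hnadj h.1, ?_⟩
  · refine Finset.filter_ssubset.mpr ⟨a, ha, ?_⟩
    rintro (h | h)
    exacts [(hCR h).2.1 rfl, h.1.ne rfl]
  · exact Finset.mem_filter.mpr ⟨hb, .inl (mem_componentIn_self ⟨hb, hab.symm, hnadj⟩)⟩
  · intro v hv hvS
    obtain ⟨-, hvCS⟩ := Finset.mem_filter.mp hv
    have hvC : v ∈ C := hvCS.resolve_right hvS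
    obtain ⟨-, hva, hav⟩ := hCR hvC
    refine ⟨hva, hav, fun x ⟨hvx, hxD⟩ => Finset.mem_filter.mpr ⟨hxD, ?_⟩⟩
    by_cases hxR : x ∈ R
    · exact .inl (mem_componentIn_of_adj hvC hxR hvx)
    · have hax : x = a ∨ H.Adj a x := by
        by_contra! h
        exact hxR ⟨hxD, h.1, h.2⟩
      exact .inr ⟨hax.resolve_left fun h => hav (h ▸ hvx.symm), v, hvC, hvx⟩

theorem exists_isClique_neighborSet_inter (hH : Chordal H) {K : Set α} (hK : H.IsClique K)
    (D : Finset α) (hD : ¬ (D : Set α) ⊆ K) :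
    ∃ v ∈ D, v ∉ K ∧ H.IsClique (H.neighborSet v ∩ D) := by
  classical
  induction D using Finset.strongInduction generalizing K with
  | H D ih =>
  obtain ⟨w, hwD, hwK⟩ := Set.not_subset.mp hD
  by_cases hDc : H.IsClique (D : Set α)
  · exact ⟨w, hwD, hwK, hDc.subset Set.inter_subset_right⟩
  by_cases hu : ∃ u ∈ D, u ∈ K ∧ ∀ x ∈ D, x ≠ u → H.Adj u x
  · obtain ⟨u, huD, huK, hadj⟩ := hu
    have hwu : w ∈ D.erase u := Finset.mem_erase.mpr ⟨fun h => hwK (h ▸ huK), hwD⟩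
    obtain ⟨v, hv, hvK, hvc⟩ := ih _ (Finset.erase_ssubset huD) hK fun h => hwK (h hwu)
    refine ⟨v, Finset.mem_of_mem_erase hv, hvK, (hvc.insert (a := u) ?_).subset ?_⟩
    · exact fun x hx hux => hadj x (Finset.mem_of_mem_erase hx.2) hux.symm
    · rintro x ⟨hvx, hxD⟩
      by_cases hxu : x = u
      · exact .inl hxu
      · exact .inr ⟨hvx, Finset.mem_erase.mpr ⟨hxu, hxD⟩⟩
  obtain ⟨a, ha, b, hb, hab, hnadj, haK⟩ : ∃ a ∈ D, ∃ b ∈ D, a ≠ b ∧ ¬ H.Adj a b ∧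
      ∀ x ∈ D, x ∈ K → x = a ∨ H.Adj a x := by
    by_cases hKD : ∃ a ∈ D, a ∈ K
    · obtain ⟨a, ha, haK⟩ := hKD
      push Not at hu
      obtain ⟨b, hb, hba, hnadj⟩ := hu a ha haK
      exact ⟨a, ha, b, hb, hba.symm, hnadj,
        fun x _ hxK => (eq_or_ne x a).imp id fun h => hK haK hxK h.symm⟩
    · push Not at hKD
      simp only [IsClique, Set.Pairwise, not_forall] at hDc
      obtain ⟨a, ha, b, hb, hab, hnadj⟩ := hDc
      exact ⟨a, ha, b, hb, hab, hnadj, fun x hx hxK => (hKD x hx hxK).elim⟩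
  -- a simplicial vertex of the side of `b` is simplicial in `D`, and avoids `K ⊆ N[a]`
  obtain ⟨D', hD', S, hS, hbD', hbS, hsep⟩ := hH.exists_ssubset_of_not_adj ha hb hab hnadj
  obtain ⟨v, hv, hvS, hvc⟩ := ih D' hD' hS fun h => hbS (h hbD')
  obtain ⟨hva, hav, hsub⟩ := hsep v hv hvS
  refine ⟨v, hD'.subset hv, fun hvK => ?_,
    hvc.subset (Set.subset_inter Set.inter_subset_left hsub)⟩
  rcases haK v (hD'.subset hv) hvK with h | h
  exacts [hva h, hav h]

theorem exists_isEliminationDigraph (hH : Chordal H) {K : Set α} (hK : H.IsClique K)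
    (D : Finset α) (e : Option α) (he : e ∉ some '' (D : Set α)) :
    ∃ r, IsEliminationDigraph H K D e r := by
  classical
  induction D using Finset.strongInduction generalizing e with
  | H D ih =>
  by_cases hDK : (D : Set α) ⊆ K
  · exact ⟨_, IsEliminationDigraph.preyAll_of_subset hK hDK he⟩
  obtain ⟨v, hvD, hvK, hvc⟩ := hH.exists_isClique_neighborSet_inter hK D hDK
  obtain ⟨r, hr⟩ := ih (D.erase v) (Finset.erase_ssubset hvD) (some v) (by simp)
  rw [Finset.coe_erase] at hr
  exact ⟨_, hr.sup_preyAll hvD hvK hvc he⟩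

theorem exists_acyclic_competitionGraph_eq_map_some [Finite α] (hH : Chordal H) {K : Set α}
    (hK : H.IsClique K) :
    ∃ r : Option α → Option α → Prop, IsAcyclicDigraph r ∧ competitionGraph r = H.map some ∧
      ∀ x v, r x (some v) → v ∉ K := by
  classical
  have := Fintype.ofFinite α
  obtain ⟨r, hr⟩ := hH.exists_isEliminationDigraph hK Finset.univ none (by simp)
  refine ⟨r, hr.acyclic, ?_, fun x v h hvK => ?_⟩
  · ext a b
    rw [map_adj']
    constructor
    · intro hab
      obtain ⟨z, haz, hbz⟩ := hab.2
      obtain ⟨u, -, rfl⟩ := hr.source _ _ haz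
      obtain ⟨w, -, rfl⟩ := hr.source _ _ hbz
      exact ⟨hab.1, u, w, (hr.adj_iff u (by simp) w (by simp)).mp hab, rfl, rfl⟩
    · rintro ⟨-, u, w, huw, rfl, rfl⟩
      exact (hr.adj_iff u (by simp) w (by simp)).mpr huw
  · rcases hr.prey x _ h with h | ⟨w, ⟨-, hwK⟩, hw⟩
    exacts [Option.some_ne_none v h, hwK (Option.some_injective α hw ▸ hvK)]

end Chordal

/-- If `G` has a subgraph `G₁` with `k(G₁) ≤ k` and a chordal subgraph `G₂`
with `E(G₁) ∪ E(G₂) = E(G)` and `V(G₁) ∩ V(G₂)` a clique of `G₂`, then `k(G) ≤ k + 1`. -/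
theorem compNumber_le_of_chordal_decomposition
    {V : Type u} [Fintype V] (G : SimpleGraph V) (k : ℕ)
    (G₁ G₂ : G.Subgraph)
    (hk₁ : compNumber G₁.coe ≤ k)
    (hch : Chordal G₂.coe)
    (hE : G₁.edgeSet ∪ G₂.edgeSet = G.edgeSet)
    (hclique : (G₁.verts ∩ G₂.verts).Pairwise G₂.Adj) :
    compNumber G ≤ k + 1 := by
  obtain ⟨r₁, hr₁, hcomp₁⟩ := isCompetitionGraphOfAcyclicDigraph_iff.mp
    (isCompetitionGraphOfAcyclicDigraph_of_compNumber_le hk₁)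
  have hK : G₂.coe.IsClique {v : G₂.verts | (v : V) ∈ G₁.verts} :=
    fun x hx y hy hxy => hclique ⟨hx, x.2⟩ ⟨hy, y.2⟩ (Subtype.coe_injective.ne hxy)
  obtain ⟨r₂, hr₂, hcomp₂, hprey₂⟩ := hch.exists_acyclic_competitionGraph_eq_map_some hK
  -- the extra prey of the chordal part is the one new isolated vertex
  let ι : G₁.verts ⊕ Fin k → V ⊕ Fin (k + 1) := Sum.map Subtype.val Fin.castSucc
  let ε : Option G₂.verts → V ⊕ Fin (k + 1) :=
    fun o => o.elim (.inr (Fin.last k)) (.inl ∘ Subtype.val)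
  have hι : ι.Injective := Sum.map_injective.mpr ⟨Subtype.val_injective, Fin.castSucc_injective k⟩
  have hε : ε.Injective := by
    rintro (_ | a) (_ | b) h <;> simp_all [ε, Subtype.val_injective.eq_iff]
  have hprey : ∀ x y, r₂ x y → ε y ∉ Set.range ι := by
    rintro x (_ | v) h ⟨w | i, hw⟩ <;> simp [ι, ε] at hw
    exact hprey₂ x v h (show (v : V) ∈ G₁.verts from hw ▸ w.2)
  have hG : G.map Sum.inl = (G₁.coe.map Sum.inl).map ι ⊔ (G₂.coe.map some).map ε := by
    rw [map_map, map_map]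
    exact (Subgraph.map_coe_sup_map_coe hE Sum.inl).symm
  refine Nat.sInf_le ?_
  show IsCompetitionGraphOfAcyclicDigraph (addIsolated G (k + 1))
  rw [addIsolated_eq_map, hG, ← addIsolated_eq_map, ← hcomp₁, ← hcomp₂]
  exact isCompetitionGraphOfAcyclicDigraph_map_sup_map hr₁ hr₂ hι hε hprey
end
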